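/- Let κ = 1 + √2 and ω ∈ ℝ. Suppose (θ0, θ1, θ2, θ3, ζ) ∈ ℝ⁵ is an equilibrium of the minimal frequency-spiral model with parameter ω such that cos θ_i > 0 for every i ∈ {0, 1, 2, 3}. Then ω·√(2/κ) = sin ζ/(√2 + cos ζ)^{1/2} − cos ζ/(√2 + sin ζ)^{1/2} − sin ζ/(√2 − cos ζ)^{1/2} + cos ζ/(√2 − sin ζ)^{1/2}. -/

import Mathlib

open Real

/-- An equilibrium of the minimal frequency-spiral model with parameter `ω` and
`κ = 1 + √2`: all five right-hand sides of the ODE system vanish. -/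
def IsMinimalSpiralEquilibrium (ω θ0 θ1 θ2 θ3 ζ : ℝ) : Prop :=
  Real.sin (ζ - θ0) - (1 + Real.sqrt 2) * Real.sin θ0 = 0 ∧
  Real.sin (ζ - θ1 - Real.pi / 2) - (1 + Real.sqrt 2) * Real.sin θ1 = 0 ∧
  Real.sin (ζ - θ2 - Real.pi) - (1 + Real.sqrt 2) * Real.sin θ2 = 0 ∧
  Real.sin (ζ - θ3 - 3 * Real.pi / 2) - (1 + Real.sqrt 2) * Real.sin θ3 = 0 ∧
  ω - Real.sin (ζ - θ0) - Real.sin (ζ - θ1 - Real.pi / 2)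
    - Real.sin (ζ - θ2 - Real.pi) - Real.sin (ζ - θ3 - 3 * Real.pi / 2) = 0

/-!
Each equation `sin (ζ - θᵢ - iπ/2) = κ sin θᵢ` says that `(sin θᵢ, cos θᵢ)` is parallel to
`(sin α, κ + cos α)` with `α = ζ - iπ/2`; since `cos θᵢ > 0` and `κ + cos α > 0` the two vectors
point the same way, so `sin θᵢ = sin α / √(κ² + 2κ cos α + 1)`. For `κ = 1 + √2` one has
`κ² + 1 = 2√2 κ`, so the radicand is `2κ (√2 + cos α)`, and summing `ω = κ ∑ sin θᵢ` over the
four quarter-turn shifts of `ζ` gives the relation.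
-/

theorem sin_mul_sqrt_eq_of_sin_sub_eq_mul_sin {κ α θ : ℝ} (hκ : 1 < κ) (hθ : 0 < cos θ)
    (h : sin (α - θ) = κ * sin θ) :
    sin θ * √(κ ^ 2 + 2 * κ * cos α + 1) = sin α := by
  have hcross : sin α * cos θ = (κ + cos α) * sin θ := by
    rw [sin_sub] at h; linarith
  have hκcos : 0 < κ + cos α := by linarith [neg_one_le_cos α]
  have hr : √(κ ^ 2 + 2 * κ * cos α + 1) ^ 2 = (κ + cos α) ^ 2 + sin α ^ 2 := by
    rw [sq_sqrt (by nlinarith [sin_sq_add_cos_sq α])]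
    linear_combination -sin_sq_add_cos_sq α
  have hcos : cos θ * √(κ ^ 2 + 2 * κ * cos α + 1) = κ + cos α := by
    refine (pow_left_inj₀ (by positivity) hκcos.le two_ne_zero).mp ?_
    linear_combination cos θ ^ 2 * hr + (κ + cos α) ^ 2 * sin_sq_add_cos_sq θ
      + (sin α * cos θ + (κ + cos α) * sin θ) * hcross
  refine mul_left_cancel₀ hθ.ne' ?_
  linear_combination sin θ * hcos - hcross

theorem one_add_sqrt_two_mul_sqrt_two_div : (1 + √2) * √(2 / (1 + √2)) = √(2 * (1 + √2)) := by
  have hκ : 0 < 1 + √2 := by positivity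
  rw [show 2 * (1 + √2) = 2 / (1 + √2) * (1 + √2) ^ 2 by field_simp,
    sqrt_mul (by positivity), sqrt_sq hκ.le, mul_comm]

theorem one_add_sqrt_two_mul_sin_of_sin_sub_eq {α θ : ℝ} (hθ : 0 < cos θ)
    (h : sin (α - θ) = (1 + √2) * sin θ) :
    (1 + √2) * sin θ * √(2 / (1 + √2)) = sin α / √(√2 + cos α) := by
  have hsin := sin_mul_sqrt_eq_of_sin_sub_eq_mul_sin (by linarith [one_lt_sqrt_two]) hθ h
  have hpos : 0 < √2 + cos α := by linarith [one_lt_sqrt_two, neg_one_le_cos α]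
  rw [show (1 + √2) ^ 2 + 2 * (1 + √2) * cos α + 1 = 2 * (1 + √2) * (√2 + cos α) by
      linear_combination -sq_sqrt (zero_le_two : (0 : ℝ) ≤ 2), sqrt_mul (by positivity)] at hsin
  rw [eq_div_iff (sqrt_pos.mpr hpos).ne', ← hsin, ← one_add_sqrt_two_mul_sqrt_two_div]
  ring

/-- At any equilibrium of the minimal frequency-spiral model (`κ = 1 + √2`) with
`cos θ_i > 0` for every `i`, the parameter `ω` and the central phase `ζ` satisfy
`ω·√(2/κ) = sin ζ/(√2+cos ζ)^{1/2} − cos ζ/(√2+sin ζ)^{1/2} − sin ζ/(√2−cos ζ)^{1/2}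
 + cos ζ/(√2−sin ζ)^{1/2}`. -/
theorem minimalSpiral_omega_zeta_relation (ω θ0 θ1 θ2 θ3 ζ : ℝ)
    (h : IsMinimalSpiralEquilibrium ω θ0 θ1 θ2 θ3 ζ)
    (h0 : 0 < Real.cos θ0) (h1 : 0 < Real.cos θ1)
    (h2 : 0 < Real.cos θ2) (h3 : 0 < Real.cos θ3) :
    ω * Real.sqrt (2 / (1 + Real.sqrt 2)) =
      Real.sin ζ / Real.sqrt (Real.sqrt 2 + Real.cos ζ)
        - Real.cos ζ / Real.sqrt (Real.sqrt 2 + Real.sin ζ)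
        - Real.sin ζ / Real.sqrt (Real.sqrt 2 - Real.cos ζ)
        + Real.cos ζ / Real.sqrt (Real.sqrt 2 - Real.sin ζ) := by
  obtain ⟨e0, e1, e2, e3, eω⟩ := h
  have k0 := one_add_sqrt_two_mul_sin_of_sin_sub_eq h0 (sub_eq_zero.mp e0)
  have k1 := one_add_sqrt_two_mul_sin_of_sin_sub_eq (α := ζ - π / 2) h1
    (by rw [sub_right_comm]; exact sub_eq_zero.mp e1)
  have k2 := one_add_sqrt_two_mul_sin_of_sin_sub_eq (α := ζ - π) h2
    (by rw [sub_right_comm]; exact sub_eq_zero.mp e2)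
  have k3 := one_add_sqrt_two_mul_sin_of_sin_sub_eq (α := ζ - π / 2 - π) h3
    (by rw [show ζ - π / 2 - π - θ3 = ζ - θ3 - 3 * π / 2 by ring]; exact sub_eq_zero.mp e3)
  simp only [sin_sub_pi, cos_sub_pi, sin_sub_pi_div_two, cos_sub_pi_div_two, neg_neg,
    ← sub_eq_add_neg] at k1 k2 k3
  rw [show ω = (1 + √2) * sin θ0 + (1 + √2) * sin θ1 + (1 + √2) * sin θ2 + (1 + √2) * sin θ3
    by linarith]
  linear_combination k0 + k1 + k2 + k3
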